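/- Let M be a connected n-manifold with boundary ∂M such that the interior M − ∂M is metrisable and ∂M has uncountably many connected components. Then ∂M is not collared in M. -/

import Mathlib

open Set Topology unitInterval

variable {X : Type*} [TopologicalSpace X]

/-- `h : B × [0,1] → X` is a collar of `B` in `X`: an embedding with `h(x,0) = x`,
`h⁻¹(B) = B × {0}`, and `h(B × [0,1))` open in `X`. -/
def IsCollarMap (B : Set X) (h : B × I → X) : Prop :=
  Topology.IsEmbedding h ∧ (∀ x : B, h (x, 0) = (x : X)) ∧
    h ⁻¹' B = {p : B × I | p.2 = 0} ∧ IsOpen (h '' {p : B × I | p.2 < 1})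

/-- `B` is collared in `X`. -/
def IsCollared (B : Set X) : Prop := ∃ h : B × I → X, IsCollarMap B h

/-- `B` is strongly collared in `X`: the collar map can be chosen to be a closed map. -/
def IsStronglyCollared (B : Set X) : Prop :=
  ∃ h : B × I → X, IsCollarMap B h ∧ IsClosedMap h

/-- `x` has a neighbourhood homeomorphic to `ℝ^{n-1} × ℝ_{≥0}`. -/
def HasBoundaryChart (n : ℕ) (x : X) : Prop :=
  ∃ U : Set X, U ∈ nhds x ∧ Nonempty (U ≃ₜ ((Fin (n - 1) → ℝ) × {r : ℝ // 0 ≤ r}))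

/-- `x` has a neighbourhood homeomorphic to `ℝⁿ`. -/
def HasInteriorChart (n : ℕ) (x : X) : Prop :=
  ∃ U : Set X, U ∈ nhds x ∧ Nonempty (U ≃ₜ (Fin n → ℝ))

/-- An `n`-manifold with boundary: a Hausdorff space such that every point has a neighbourhood
homeomorphic to `ℝ^{n-1} × ℝ_{≥0}` (Hausdorffness is a separate instance hypothesis). -/
def IsManifoldWithBoundary (n : ℕ) (M : Type*) [TopologicalSpace M] : Prop :=
  ∀ x : M, HasBoundaryChart n x

/-- The boundary `∂M`: the points with no neighbourhood homeomorphic to `ℝⁿ`. -/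
def mBoundary (n : ℕ) (M : Type*) [TopologicalSpace M] : Set M :=
  {x : M | ¬ HasInteriorChart n x}

/-! The collar shows that `Bᶜ` is connected: each collar line `h ({b} × (0,1))` is connected,
lies in `Bᶜ` and ends at `b`, so a separation of `Bᶜ` extends along the collar to one of the
connected space `M`. Since the interior is locally euclidean, `Bᶜ` is locally compact and locally
connected; the latter makes the components of `B` open. A connected, locally compact,
metrisable space is paracompact and hence σ-compact, so `Bᶜ` is separable. But the sets
`h (C × (0,1))`, for the components `C` of `B`, are disjoint nonempty open subsets of `Bᶜ`, so
there are only countably many components. -/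

open Filter TopologicalSpace

section Charts

variable {Y : Type*} [TopologicalSpace Y]

theorem map_nhds_of_homeomorph_of_mem_nhds {x : X} {U : Set X} (hU : U ∈ 𝓝 x) (φ : U ≃ₜ Y) :
    map (fun y ↦ (φ.symm y : X)) (𝓝 (φ ⟨x, mem_of_mem_nhds hU⟩)) = 𝓝 x := by
  have : map φ.symm (𝓝 (φ ⟨x, mem_of_mem_nhds hU⟩)) = 𝓝 ⟨x, mem_of_mem_nhds hU⟩ := by
    rw [φ.symm.map_nhds_eq, φ.symm_apply_apply]
  rw [← Function.comp_def, ← map_map, this, map_nhds_subtype_val, nhdsWithin_eq_nhds.2 hU]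

variable {n : ℕ} {x : X}

theorem HasInteriorChart.exists_isPreconnected_mem_nhds_subset (hx : HasInteriorChart n x)
    {s : Set X} (hs : s ∈ 𝓝 x) : ∃ t ∈ 𝓝 x, t ⊆ s ∧ IsPreconnected t := by
  obtain ⟨U, hU, ⟨φ⟩⟩ := hx
  rw [← map_nhds_of_homeomorph_of_mem_nhds hU φ] at hs ⊢
  obtain ⟨t, ⟨ht, htc⟩, hts⟩ :=
    ((locallyConnectedSpace_iff_connected_basis.1 inferInstance _).map _).mem_iff.1 hs
  exact ⟨_, image_mem_map ht, hts, htc.image _ (by fun_prop)⟩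

theorem HasInteriorChart.exists_isCompact_mem_nhds_subset (hx : HasInteriorChart n x)
    {s : Set X} (hs : s ∈ 𝓝 x) : ∃ K ∈ 𝓝 x, K ⊆ s ∧ IsCompact K := by
  obtain ⟨U, hU, ⟨φ⟩⟩ := hx
  rw [← map_nhds_of_homeomorph_of_mem_nhds hU φ] at hs ⊢
  obtain ⟨K, ⟨hK, hKc⟩, hKs⟩ := ((compact_basis_nhds _).map _).mem_iff.1 hs
  exact ⟨_, image_mem_map hK, hKs, hKc.image (by fun_prop)⟩

theorem isOpen_setOf_hasInteriorChart (n : ℕ) : IsOpen {x : X | HasInteriorChart n x} :=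
  isOpen_iff_mem_nhds.2 fun _ ⟨U, hU, hφ⟩ ↦ mem_of_superset (interior_mem_nhds.2 hU)
    fun _ hy ↦ ⟨U, mem_interior_iff_mem_nhds.1 hy, hφ⟩

theorem weaklyLocallyCompactSpace_of_hasInteriorChart {S : Set X} (hS : IsOpen S)
    (h : ∀ x ∈ S, HasInteriorChart n x) : WeaklyLocallyCompactSpace S where
  exists_compact_mem_nhds x := by
    obtain ⟨K, hK, hKS, hKc⟩ := (h x x.2).exists_isCompact_mem_nhds_subset (hS.mem_nhds x.2)
    refine ⟨Subtype.val ⁻¹' K, ?_, continuous_subtype_val.continuousAt.preimage_mem_nhds hK⟩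
    rwa [Subtype.isCompact_iff, image_preimage_eq_of_subset (by rwa [Subtype.range_val])]

end Charts

theorem isClosed_mBoundary (n : ℕ) (M : Type*) [TopologicalSpace M] :
    IsClosed (mBoundary n M) :=
  (isOpen_setOf_hasInteriorChart n).isClosed_compl

section SigmaCompact

variable {ι : Type*}

theorem PreconnectedSpace.exists_countable_subcover_of_starCountable [PreconnectedSpace X]
    {t : ι → Set X} (ht : ∀ i, IsOpen (t i)) (hcov : ⋃ i, t i = univ)
    (hstar : ∀ i, {j | (t i ∩ t j).Nonempty}.Countable) :
    ∃ s : Set ι, s.Countable ∧ ⋃ i ∈ s, t i = univ := by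
  rcases isEmpty_or_nonempty X with hX | ⟨⟨x₀⟩⟩
  · exact ⟨∅, countable_empty, Subsingleton.elim _ _⟩
  obtain ⟨i₀, hi₀⟩ := mem_iUnion.1 (hcov ▸ mem_univ x₀)
  let S : ℕ → Set ι := fun k ↦ Nat.rec {i₀} (fun _ Sk ↦ ⋃ i ∈ Sk, {j | (t i ∩ t j).Nonempty}) k
  let G := ⋃ k, S k
  have hG : G.Countable := countable_iUnion fun k ↦ by
    induction k with
    | zero => exact countable_singleton i₀
    | succ k ih => exact ih.biUnion fun i _ ↦ hstar i
  have hGclosed : ∀ i ∈ G, ∀ j, (t i ∩ t j).Nonempty → j ∈ G := fun i hi j hij ↦ by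
    obtain ⟨k, hk⟩ := mem_iUnion.1 hi
    exact mem_iUnion.2 ⟨k + 1, mem_biUnion hk hij⟩
  refine ⟨G, hG, univ_subset_iff.1 ?_⟩
  refine isPreconnected_univ.subset_left_of_subset_union (v := ⋃ j ∈ Gᶜ, t j)
    (isOpen_biUnion fun i _ ↦ ht i) (isOpen_biUnion fun i _ ↦ ht i) ?_ ?_
    ⟨x₀, mem_univ _, mem_biUnion (mem_iUnion.2 ⟨0, rfl⟩) hi₀⟩
  · simp only [disjoint_iUnion₂_left, disjoint_iUnion₂_right]
    exact fun j hj i hi ↦ not_not.1 fun hij ↦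
      hj (hGclosed i hi j (not_disjoint_iff_nonempty_inter.1 hij))
  · intro x _
    obtain ⟨i, hi⟩ := mem_iUnion.1 (hcov ▸ mem_univ x)
    by_cases hiG : i ∈ G
    · exact Or.inl (mem_biUnion hiG hi)
    · exact Or.inr (mem_biUnion hiG hi)

theorem sigmaCompactSpace_of_paracompact_of_preconnected [ParacompactSpace X]
    [PreconnectedSpace X] [WeaklyLocallyCompactSpace X] : SigmaCompactSpace X := by
  choose K hKc hK using exists_compact_mem_nhds (X := X)
  obtain ⟨t, hto, htcov, htlf, htK⟩ := precise_refinement (fun x ↦ interior (K x))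
    (fun _ ↦ isOpen_interior)
    (eq_univ_of_forall fun x ↦ mem_iUnion.2 ⟨x, mem_interior_iff_mem_nhds.2 (hK x)⟩)
  have htK' : ∀ x, t x ⊆ K x := fun x ↦ (htK x).trans interior_subset
  obtain ⟨s, hs, hscov⟩ := PreconnectedSpace.exists_countable_subcover_of_starCountable hto htcov
    fun x ↦ .mono (fun _ ⟨z, hzx, hzy⟩ ↦ (⟨z, hzy, htK' x hzx⟩ : (t _ ∩ K x).Nonempty))
      (htlf.finite_nonempty_inter_compact (hKc x)).countable
  refine SigmaCompactSpace.of_countable (K '' s) (hs.image K) (forall_mem_image.2 fun x _ ↦ hKc x)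
    (univ_subset_iff.1 ?_)
  rw [← hscov, sUnion_image]
  exact biUnion_mono subset_rfl fun x _ ↦ htK' x

end SigmaCompact

section Collar

variable {B : Set X} {h : B × I → X}

namespace IsCollarMap

theorem isOpen_image (hh : IsCollarMap B h) {O : Set (B × I)} (hO : IsOpen O)
    (hO1 : O ⊆ {p | p.2 < 1}) : IsOpen (h '' O) := by
  obtain ⟨W, hW, rfl⟩ := hh.1.isInducing.isOpen_iff.1 hO
  rw [← inter_eq_self_of_subset_right hO1, image_inter_preimage]
  exact hh.2.2.2.inter hW

theorem apply_notMem (hh : IsCollarMap B h) {p : B × I} (hp : p.2 ≠ 0) : h p ∉ B :=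
  fun hpB ↦ hp (show p ∈ {p : B × I | p.2 = 0} from hh.2.2.1 ▸ hpB)

theorem mem_Ioo_of_apply_notMem (hh : IsCollarMap B h) {p : B × I} (hp1 : p.2 < 1)
    (hpB : h p ∉ B) : p.2 ∈ Ioo 0 1 := by
  refine ⟨(unitInterval.nonneg' (t := p.2)).lt_of_ne' fun hp0 ↦ hpB ?_, hp1⟩
  rw [show p = (p.1, 0) from Prod.ext rfl hp0, hh.2.1]
  exact p.1.2

/-- The open collar lines `h ({b} × (0,1))` are connected subsets of `Bᶜ`, so a separation of
`Bᶜ` cannot cut them. -/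
theorem apply_mem_of_apply_mem (hh : IsCollarMap B h) {u v : Set X} (hu : IsOpen u)
    (hv : IsOpen v) (huv : Disjoint u v) (hcov : Bᶜ ⊆ u ∪ v) {b : B} {s t : I}
    (hs : s ∈ Ioo 0 1) (ht : t ∈ Ioo 0 1) (hsu : h (b, s) ∈ u) : h (b, t) ∈ u := by
  have hline : h '' ({b} ×ˢ Ioo 0 1) ⊆ Bᶜ := by
    rintro _ ⟨p, ⟨-, hp⟩, rfl⟩
    exact hh.apply_notMem hp.1.ne'
  exact (isPreconnected_singleton.prod isPreconnected_Ioo |>.image h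
    hh.1.continuous.continuousOn).subset_left_of_subset_union hu hv huv (hline.trans hcov)
    ⟨_, ⟨(b, s), ⟨rfl, hs⟩, rfl⟩, hsu⟩ ⟨(b, t), ⟨rfl, ht⟩, rfl⟩

theorem eq_empty_or_eq_empty_of_separation [PreconnectedSpace X] (hh : IsCollarMap B h)
    {u v : Set X} (hu : IsOpen u) (hv : IsOpen v) (huv : Disjoint u v) (hcov : Bᶜ ⊆ u ∪ v)
    (huB : u ⊆ Bᶜ) (hvB : v ⊆ Bᶜ) : u = ∅ ∨ v = ∅ := by
  obtain ⟨t₀, ht₀⟩ : (Ioo (0 : I) 1).Nonempty := nonempty_Ioo.2 zero_lt_one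
  -- `E u` and `E v` extend the separation of `Bᶜ` along the collar lines to a separation of `X`.
  let E : Set X → Set X := fun w ↦ w ∪ h '' {p | p.2 < 1 ∧ h (p.1, t₀) ∈ w}
  have hEo : ∀ w, IsOpen w → IsOpen (E w) := fun w hw ↦ hw.union <| hh.isOpen_image
    ((isOpen_lt continuous_snd continuous_const).inter <|
      hw.preimage (hh.1.continuous.comp (by fun_prop))) fun _ hp ↦ hp.1
  have hEcov : univ ⊆ E u ∪ E v := by
    intro x _
    by_cases hxB : x ∈ B
    · have hx : h (⟨x, hxB⟩, 0) = x := hh.2.1 _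
      rcases hcov (hh.apply_notMem (p := (⟨x, hxB⟩, t₀)) ht₀.1.ne') with hu' | hv'
      · exact Or.inl (Or.inr ⟨_, ⟨zero_lt_one, hu'⟩, hx⟩)
      · exact Or.inr (Or.inr ⟨_, ⟨zero_lt_one, hv'⟩, hx⟩)
    · exact (hcov hxB).imp Or.inl Or.inl
  have hcross : ∀ {w w' : Set X}, IsOpen w → IsOpen w' → Disjoint w w' → Bᶜ ⊆ w ∪ w' →
      w ⊆ Bᶜ → ∀ p : B × I, p.2 < 1 → h (p.1, t₀) ∈ w' → h p ∉ w :=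
    fun hw hw' hww' hcov' hwB p hp1 hpw' hpw ↦ disjoint_left.1 hww'.symm hpw' <|
      hh.apply_mem_of_apply_mem hw hw' hww' hcov'
        (hh.mem_Ioo_of_apply_notMem hp1 (hwB hpw)) ht₀ hpw
  have hEdisj : Disjoint (E u) (E v) := by
    rw [disjoint_left]
    rintro _ (hxu | ⟨p, ⟨hp1, hpu⟩, rfl⟩) (hxv | ⟨q, ⟨hq1, hqv⟩, hqx⟩)
    · exact disjoint_left.1 huv hxu hxv
    · exact hcross hu hv huv hcov huB q hq1 hqv (hqx ▸ hxu)
    · exact hcross hv hu huv.symm (hcov.trans (union_comm u v).subset) hvB p hp1 hpu hxv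
    · obtain rfl := hh.1.injective hqx
      exact disjoint_left.1 huv hpu hqv
  refine u.eq_empty_or_nonempty.imp id fun ⟨x, hx⟩ ↦ eq_empty_of_subset_empty fun y hy ↦ ?_
  have hEu := isPreconnected_univ.subset_left_of_subset_union (hEo u hu) (hEo v hv) hEdisj hEcov
    ⟨x, mem_univ x, Or.inl hx⟩
  exact disjoint_left.1 hEdisj (hEu (mem_univ y)) (Or.inl hy)

theorem isPreconnected_compl [PreconnectedSpace X] (hh : IsCollarMap B h) (hB : IsClosed B) :
    IsPreconnected Bᶜ := by
  rw [isPreconnected_iff_subset_of_disjoint]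
  intro u v hu hv hcov huv
  have hsep : Disjoint (Bᶜ ∩ u) (Bᶜ ∩ v) := by
    rw [disjoint_iff_inter_eq_empty, inter_inter_inter_comm, inter_self, huv]
  rcases hh.eq_empty_or_eq_empty_of_separation (hB.isOpen_compl.inter hu)
    (hB.isOpen_compl.inter hv) hsep (by rwa [← inter_union_distrib_left, subset_inter_iff,
      and_iff_right subset_rfl]) inter_subset_left inter_subset_left with h0 | h0
  · exact Or.inr fun x hx ↦ (hcov hx).resolve_left fun hxu ↦ h0.subset ⟨hx, hxu⟩
  · exact Or.inl fun x hx ↦ (hcov hx).resolve_right fun hxv ↦ h0.subset ⟨hx, hxv⟩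

section LocallyConnected

variable (hh : IsCollarMap B h)
  (hlc : ∀ x ∉ B, ∀ s ∈ 𝓝 x, ∃ t ∈ 𝓝 x, t ⊆ s ∧ IsPreconnected t)
include hh hlc

/-- A connected neighbourhood of a point `h (b, t₀)` inside the collar projects onto a connected
neighbourhood of `b` in `B`. -/
theorem isOpen_connectedComponent (b : B) : IsOpen (connectedComponent b) := by
  obtain ⟨t₀, ht₀⟩ : (Ioo (0 : I) 1).Nonempty := nonempty_Ioo.2 zero_lt_one
  suffices hnhds : ∀ c : B, connectedComponent c ∈ 𝓝 c from
    isOpen_iff_mem_nhds.2 fun c' hc' ↦ connectedComponent_eq hc' ▸ hnhds c'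
  intro c
  obtain ⟨t, ht, htW, htc⟩ := hlc _ (hh.apply_notMem (p := (c, t₀)) ht₀.1.ne') _
    (hh.2.2.2.mem_nhds ⟨_, ht₀.2, rfl⟩)
  have hT : h ⁻¹' t ∈ 𝓝 (c, t₀) := hh.1.continuous.continuousAt.preimage_mem_nhds ht
  have hTc : IsPreconnected (h ⁻¹' t) := hh.1.isInducing.isPreconnected_image.1 <| by
    rwa [image_preimage_eq_of_subset (htW.trans (image_subset_range _ _))]
  exact mem_of_superset (isOpenMap_fst.image_mem_nhds hT)
    ((hTc.image _ continuous_fst.continuousOn).subset_connectedComponent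
      ⟨_, mem_of_mem_nhds hT, rfl⟩)

/-- The sets `h (C × (0,1))`, for the components `C` of `B`, are disjoint nonempty open subsets
of `Bᶜ`. -/
theorem countable_connectedComponents [SeparableSpace (Bᶜ : Set X)] :
    {C : Set B | ∃ x, C = connectedComponent x}.Countable := by
  obtain ⟨t₀, ht₀⟩ : (Ioo (0 : I) 1).Nonempty := nonempty_Ioo.2 zero_lt_one
  let slice : Set B → Set (Bᶜ : Set X) :=
    fun C ↦ Subtype.val ⁻¹' (h '' {p | p.1 ∈ C ∧ p.2 ∈ Ioo 0 1})
  refine PairwiseDisjoint.countable_of_isOpen (s := slice) ?_ ?_ ?_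
  · rintro _ ⟨x, rfl⟩ _ ⟨y, rfl⟩ hxy
    refine disjoint_left.2 fun z ⟨p, hp, hpz⟩ ⟨q, hq, hqz⟩ ↦ hxy ?_
    obtain rfl := hh.1.injective (hpz.trans hqz.symm)
    exact (connectedComponent_eq hp.1).trans (connectedComponent_eq hq.1).symm
  · rintro _ ⟨x, rfl⟩
    refine (hh.isOpen_image ?_ fun p hp ↦ hp.2.2).preimage continuous_subtype_val
    exact ((hh.isOpen_connectedComponent hlc x).preimage continuous_fst).inter
      (isOpen_Ioo.preimage continuous_snd)
  · rintro _ ⟨x, rfl⟩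
    exact ⟨⟨h (x, t₀), hh.apply_notMem ht₀.1.ne'⟩, (x, t₀), ⟨mem_connectedComponent, ht₀⟩, rfl⟩

end LocallyConnected

end IsCollarMap

end Collar

theorem boundary_not_collared_of_uncountably_many_components_general (n : ℕ) (M : Type*)
    [TopologicalSpace M] [ConnectedSpace M]
    (hint : TopologicalSpace.MetrizableSpace ↥((mBoundary n M)ᶜ))
    (huncount : ¬ {C : Set ↥(mBoundary n M) | ∃ x, C = connectedComponent x}.Countable) :
    ¬ IsCollared (mBoundary n M) := by
  rintro ⟨h, hh⟩
  have hchart : ∀ x ∉ mBoundary n M, HasInteriorChart n x := fun _ hx ↦ not_not.1 hx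
  have : PreconnectedSpace ↥(mBoundary n M)ᶜ :=
    Subtype.preconnectedSpace (hh.isPreconnected_compl (isClosed_mBoundary n M))
  have : WeaklyLocallyCompactSpace ↥(mBoundary n M)ᶜ :=
    weaklyLocallyCompactSpace_of_hasInteriorChart (isClosed_mBoundary n M).isOpen_compl hchart
  have : ParacompactSpace ↥(mBoundary n M)ᶜ :=
    let := metrizableSpaceMetric ↥(mBoundary n M)ᶜ; inferInstance
  have := sigmaCompactSpace_of_paracompact_of_preconnected (X := ↥(mBoundary n M)ᶜ)
  exact huncount (hh.countable_connectedComponents fun x hx _ ↦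
    (hchart x hx).exists_isPreconnected_mem_nhds_subset)

/-- If `M` is a connected `n`-manifold with boundary such that the interior `M − ∂M` is
metrisable and `∂M` has uncountably many connected components, then `∂M` is not collared. -/
theorem boundary_not_collared_of_uncountably_many_components (n : ℕ) (M : Type*)
    [TopologicalSpace M] [T2Space M] [ConnectedSpace M]
    (hM : IsManifoldWithBoundary n M)
    (hint : TopologicalSpace.MetrizableSpace ↥((mBoundary n M)ᶜ))
    (huncount : ¬ {C : Set ↥(mBoundary n M) | ∃ x, C = connectedComponent x}.Countable) :
    ¬ IsCollared (mBoundary n M) :=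
  boundary_not_collared_of_uncountably_many_components_general n M hint huncount
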